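/- arXiv:0901.3904 — 2 statements merged into one kernel-verified Lean document; each statement's English description precedes it below -/
import Mathlib

section
/- Let b, c ∈ ℝ with b ≠ 0 and b² + c² = 1, and fix A > 0. Define x, y, z : ℝ → ℝ by x(u) = (2/b)·arctan(√A·e^{bu}), z(u) = log(e^{−bu} + A·e^{bu}), y(u) = −(c/b)·z(u), and set α(u) = (x(u), y(u), z(u)) and β = (0, b, c). Then for every u ∈ ℝ: (a) ‖α'(u)‖ = 1 and ⟨α'(u), β⟩ = 0; (b) x''(u) + x'(u)·z'(u) = 0; (c) y''(u) + y'(u)·z'(u) = −c·b; (d) z''(u) + z'(u)² = b²; and (e) ⟨α'(u) × β, α''(u)⟩ = ⟨α'(u) × β, e₃⟩. -/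
noncomputable section
open scoped RealInnerProductSpace

/-- ℝ³ with its standard inner product structure. -/
abbrev R3 : Type := EuclideanSpace ℝ (Fin 3)

/-- The cross product on ℝ³. -/
def cross (v w : R3) : R3 :=
  (WithLp.equiv 2 (Fin 3 → ℝ)).symm
    ![v 1 * w 2 - v 2 * w 1, v 2 * w 0 - v 0 * w 2, v 0 * w 1 - v 1 * w 0]

/-- The vector e₃ = (0,0,1). -/
def e3 : R3 := (WithLp.equiv 2 (Fin 3 → ℝ)).symm ![0, 0, 1]

/-!
Put `φ u = 2 arctan (√A e^{bu})`. Since `tan (φ/2) = √A e^{bu}`, the double-angle formulas give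
`x' = sin φ`, `y' = c cos φ`, `z' = -b cos φ` and `φ' = b sin φ`. So `α'` is a unit vector
orthogonal to `β`, and after one more differentiation every identity reduces to
`sin² φ + cos² φ = 1` and `b² + c² = 1`.
-/

open Real

abbrev vec3 (a₀ a₁ a₂ : ℝ) : R3 := (WithLp.equiv 2 (Fin 3 → ℝ)).symm ![a₀, a₁, a₂]

theorem inner_vec3 (a₀ a₁ a₂ b₀ b₁ b₂ : ℝ) :
    ⟪vec3 a₀ a₁ a₂, vec3 b₀ b₁ b₂⟫ = a₀ * b₀ + a₁ * b₁ + a₂ * b₂ := by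
  simp only [vec3, PiLp.inner_apply, RCLike.inner_apply, conj_trivial, Fin.sum_univ_three,
    WithLp.equiv_symm_apply, Matrix.cons_val_zero, Matrix.cons_val_one,
    Matrix.cons_val_two, Matrix.head_cons, Matrix.tail_cons]
  ring

theorem norm_vec3_eq_one {a₀ a₁ a₂ : ℝ} (h : a₀ ^ 2 + a₁ ^ 2 + a₂ ^ 2 = 1) :
    ‖vec3 a₀ a₁ a₂‖ = 1 := by
  rw [← pow_eq_one_iff_of_nonneg (norm_nonneg _) two_ne_zero, ← real_inner_self_eq_norm_sq,
    inner_vec3, ← h]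
  ring

theorem cross_vec3 (a₀ a₁ a₂ b₀ b₁ b₂ : ℝ) :
    cross (vec3 a₀ a₁ a₂) (vec3 b₀ b₁ b₂) =
      vec3 (a₁ * b₂ - a₂ * b₁) (a₂ * b₀ - a₀ * b₂) (a₀ * b₁ - a₁ * b₀) :=
  rfl

theorem HasDerivAt.vec3 {f₀ f₁ f₂ : ℝ → ℝ} {d₀ d₁ d₂ u : ℝ}
    (h₀ : HasDerivAt f₀ d₀ u) (h₁ : HasDerivAt f₁ d₁ u) (h₂ : HasDerivAt f₂ d₂ u) :
    HasDerivAt (fun t => vec3 (f₀ t) (f₁ t) (f₂ t)) (vec3 d₀ d₁ d₂) u := by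
  have h : HasDerivAt (fun t => ![f₀ t, f₁ t, f₂ t]) ![d₀, d₁, d₂] u := by
    rw [hasDerivAt_pi]
    intro i
    fin_cases i <;> simpa
  exact (PiLp.continuousLinearEquiv 2 ℝ (fun _ : Fin 3 => ℝ)).symm.hasFDerivAt.comp_hasDerivAt u h

theorem Real.sin_two_mul_arctan (t : ℝ) : sin (2 * arctan t) = 2 * t / (1 + t ^ 2) := by
  have hsin : sin (arctan t) = t * cos (arctan t) := by
    rw [← div_eq_iff (cos_arctan_pos t).ne', ← tan_eq_sin_div_cos, tan_arctan]
  rw [sin_two_mul, hsin, mul_assoc, mul_assoc, ← sq, cos_sq_arctan]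
  ring

theorem Real.cos_two_mul_arctan (t : ℝ) : cos (2 * arctan t) = (1 - t ^ 2) / (1 + t ^ 2) := by
  rw [cos_two_mul, cos_sq_arctan]
  field_simp
  ring

theorem HasDerivAt.two_mul_arctan {g : ℝ → ℝ} {b u : ℝ} (hg : HasDerivAt g (b * g u) u) :
    HasDerivAt (fun t => 2 * Real.arctan (g t)) (b * Real.sin (2 * Real.arctan (g u))) u := by
  refine (hg.arctan.const_mul 2).congr_deriv ?_
  rw [Real.sin_two_mul_arctan]
  ring

theorem hasDerivAt_two_mul_arctan_mul_exp (k b u : ℝ) :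
    HasDerivAt (fun t => 2 * arctan (k * exp (b * t)))
      (b * sin (2 * arctan (k * exp (b * u)))) u :=
  HasDerivAt.two_mul_arctan <| ((hasDerivAt_const_mul b).exp.const_mul k).congr_deriv (by ring)

theorem hasDerivAt_log_exp_neg_add_mul_exp {A : ℝ} (hA : 0 ≤ A) (b u : ℝ) :
    HasDerivAt (fun t => log (exp (-(b * t)) + A * exp (b * t)))
      (-(b * cos (2 * arctan (√A * exp (b * u))))) u := by
  have hbt : HasDerivAt (fun t => b * t) b u := hasDerivAt_const_mul b
  have hpos : 0 < exp (-(b * u)) + A * exp (b * u) := by positivity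
  refine ((hbt.neg.exp.add (hbt.exp.const_mul A)).log hpos.ne').congr_deriv ?_
  simp only [Pi.add_apply, Pi.neg_apply]
  rw [cos_two_mul_arctan, mul_pow, sq_sqrt hA, exp_neg]
  field_simp
  ring

theorem weighted_minimal_system_of_angle {b c : ℝ} {φ x y z : ℝ → ℝ} (hbc : b ^ 2 + c ^ 2 = 1)
    (hφ : ∀ u, HasDerivAt φ (b * sin (φ u)) u)
    (hx : ∀ u, HasDerivAt x (sin (φ u)) u) (hy : ∀ u, HasDerivAt y (c * cos (φ u)) u)
    (hz : ∀ u, HasDerivAt z (-(b * cos (φ u))) u) (u : ℝ) :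
    let α : ℝ → R3 := fun u => vec3 (x u) (y u) (z u)
    ‖deriv α u‖ = 1 ∧
      ⟪deriv α u, vec3 0 b c⟫ = 0 ∧
      deriv (deriv x) u + deriv x u * deriv z u = 0 ∧
      deriv (deriv y) u + deriv y u * deriv z u = -(c * b) ∧
      deriv (deriv z) u + deriv z u ^ 2 = b ^ 2 ∧
      ⟪cross (deriv α u) (vec3 0 b c), deriv (deriv α) u⟫ =
        ⟪cross (deriv α u) (vec3 0 b c), e3⟫ := by
  intro α
  have hx' : deriv x = fun u => sin (φ u) := funext fun u => (hx u).deriv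
  have hy' : deriv y = fun u => c * cos (φ u) := funext fun u => (hy u).deriv
  have hz' : deriv z = fun u => -(b * cos (φ u)) := funext fun u => (hz u).deriv
  have hα' : deriv α = fun u => vec3 (sin (φ u)) (c * cos (φ u)) (-(b * cos (φ u))) :=
    funext fun u => ((hx u).vec3 (hy u) (hz u)).deriv
  have hsin := (hφ u).sin
  have hcos := (hφ u).cos
  set s := sin (φ u)
  set k := cos (φ u)
  have hxx : deriv (deriv x) u = k * (b * s) := by rw [hx']; exact hsin.deriv
  have hyy : deriv (deriv y) u = c * (-s * (b * s)) := by rw [hy']; exact (hcos.const_mul c).deriv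
  have hzz : deriv (deriv z) u = -(b * (-s * (b * s))) := by
    rw [hz']; exact (hcos.const_mul b).neg.deriv
  have hαα : deriv (deriv α) u =
      vec3 (k * (b * s)) (c * (-s * (b * s))) (-(b * (-s * (b * s)))) := by
    rw [hα']; exact (hsin.vec3 (hcos.const_mul c) (hcos.const_mul b).neg).deriv
  have hpyth : s ^ 2 + k ^ 2 = 1 := sin_sq_add_cos_sq (φ u)
  rw [hxx, hyy, hzz, hαα, hx', hy', hz', hα']
  refine ⟨norm_vec3_eq_one (by linear_combination hpyth + k ^ 2 * hbc), ?_, by ring,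
    by linear_combination -(c * b) * hpyth, by linear_combination b ^ 2 * hpyth, ?_⟩
  · rw [inner_vec3]; ring
  · rw [cross_vec3, e3, inner_vec3, inner_vec3]
    linear_combination (b * s * k ^ 2 + b * s ^ 3) * hbc + b * s * hpyth

/-- Proposition 5: the explicit family (17) of cylindrical ruled minimal surfaces
with ruling β = (0, b, c) in ℝ³ with density e^z. -/
theorem explicit_surface_general_ruling
    (b c : ℝ) (hb : b ≠ 0) (hbc : b ^ 2 + c ^ 2 = 1) (A : ℝ) (hA : 0 < A)
    (x y z : ℝ → ℝ)
    (hx : ∀ u, x u = (2 / b) * Real.arctan (Real.sqrt A * Real.exp (b * u)))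
    (hz : ∀ u, z u = Real.log (Real.exp (-(b * u)) + A * Real.exp (b * u)))
    (hy : ∀ u, y u = -(c / b) * z u)
    (α : ℝ → R3)
    (hα : ∀ u, α u = (WithLp.equiv 2 (Fin 3 → ℝ)).symm ![x u, y u, z u])
    (β : R3) (hβ : β = (WithLp.equiv 2 (Fin 3 → ℝ)).symm ![0, b, c]) :
    ∀ u : ℝ,
      ‖deriv α u‖ = 1 ∧
      ⟪deriv α u, β⟫ = 0 ∧
      deriv (deriv x) u + deriv x u * deriv z u = 0 ∧
      deriv (deriv y) u + deriv y u * deriv z u = -(c * b) ∧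
      deriv (deriv z) u + deriv z u ^ 2 = b ^ 2 ∧
      ⟪cross (deriv α u) β, deriv (deriv α) u⟫ = ⟪cross (deriv α u) β, e3⟫ := by
  set φ : ℝ → ℝ := fun u => 2 * arctan (√A * exp (b * u))
  have hφ (u : ℝ) : HasDerivAt φ (b * sin (φ u)) u := hasDerivAt_two_mul_arctan_mul_exp _ b u
  have hz' (u : ℝ) : HasDerivAt z (-(b * cos (φ u))) u := by
    rw [funext hz]; exact hasDerivAt_log_exp_neg_add_mul_exp hA.le b u
  have hx' (u : ℝ) : HasDerivAt x (sin (φ u)) u := by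
    rw [show x = fun u => b⁻¹ * φ u from funext fun u => by rw [hx]; ring]
    exact ((hφ u).const_mul b⁻¹).congr_deriv (by field_simp)
  have hy' (u : ℝ) : HasDerivAt y (c * cos (φ u)) u := by
    rw [funext hy]
    refine ((hz' u).const_mul (-(c / b))).congr_deriv ?_
    field_simp
  obtain rfl : α = fun u => vec3 (x u) (y u) (z u) := funext hα
  subst hβ
  exact weighted_minimal_system_of_angle hbc hφ hx' hy' hz'
end
end

section
/- Let c ∈ ℝ, let I ⊆ ℝ be an open interval, and let g : I → ℝ be twice differentiable with g''(u)·(1 + c²) = 1 + c² + g'(u)² for all u ∈ I. Then there exist D, E ∈ ℝ such that cos((u + D)/√(1 + c²)) ≠ 0 and g(u) = −(1 + c²)·log|cos((u + D)/√(1 + c²))| + E for all u ∈ I. -/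
/-!
With `k² = 1 + c²` the equation reads `g'' = 1 + (g' / k)²`, so `arctan (g' / k)` has derivative
`1 / k` and equals `(u + D) / k` on the interval. Hence `cos ((u + D) / k) = cos (arctan (g' / k))`
never vanishes and `g' = k · tan ((u + D) / k)`, which is the derivative of
`-k² · log |cos ((u + D) / k)|`.
-/

open Real

theorem IsOpen.exists_eqOn_add_of_hasDerivAt {𝕜 G : Type*} [RCLike 𝕜] [NormedAddCommGroup G]
    [NormedSpace 𝕜 G] {s : Set 𝕜} {f F f' : 𝕜 → G} (hs : IsOpen s) (hs' : IsPreconnected s)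
    (hf : ∀ x ∈ s, HasDerivAt f (f' x) x) (hF : ∀ x ∈ s, HasDerivAt F (f' x) x) :
    ∃ a, s.EqOn f (F · + a) :=
  hs.exists_eq_add_of_deriv_eq hs'
    (fun x hx ↦ (hf x hx).differentiableAt.differentiableWithinAt)
    (fun x hx ↦ (hF x hx).differentiableAt.differentiableWithinAt)
    (fun x hx ↦ (hf x hx).deriv.trans (hF x hx).deriv.symm)

theorem Real.hasDerivAt_neg_sq_mul_log_abs_cos_div {k D u : ℝ} (hk : k ≠ 0)
    (hcos : cos ((u + D) / k) ≠ 0) :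
    HasDerivAt (fun u ↦ -k ^ 2 * log |cos ((u + D) / k)|) (k * tan ((u + D) / k)) u := by
  have hlin : HasDerivAt (fun u : ℝ ↦ (u + D) / k) (1 / k) u := by
    simpa using ((hasDerivAt_id u).add_const D).div_const k
  have hlog := (hlin.cos.log hcos).const_mul (-k ^ 2)
  simp only [log_abs]
  refine hlog.congr_deriv ?_
  rw [tan_eq_sin_div_cos]
  field_simp

section ScherkODE

variable {s : Set ℝ} {k : ℝ} {g g' g'' : ℝ → ℝ}

theorem exists_arctan_div_eq_of_ode (hs : IsOpen s) (hs' : IsPreconnected s) (hk : k ≠ 0)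
    (hg'' : ∀ u ∈ s, HasDerivAt g' (g'' u) u)
    (hode : ∀ u ∈ s, g'' u * k ^ 2 = k ^ 2 + g' u ^ 2) :
    ∃ D, ∀ u ∈ s, arctan (g' u / k) = (u + D) / k := by
  have harctan : ∀ u ∈ s, HasDerivAt (fun u ↦ arctan (g' u / k)) (1 / k) u := by
    intro u hu
    convert ((hg'' u hu).div_const k).arctan using 1
    have : k ^ 2 + g' u ^ 2 ≠ 0 := by positivity
    field_simp
    linear_combination -hode u hu
  have hlin : ∀ u ∈ s, HasDerivAt (fun u : ℝ ↦ u / k) (1 / k) u := fun u _ ↦ by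
    simpa using (hasDerivAt_id u).div_const k
  obtain ⟨a, ha⟩ := hs.exists_eqOn_add_of_hasDerivAt hs' harctan hlin
  refine ⟨a * k, fun u hu ↦ (ha hu).trans ?_⟩
  rw [add_div, mul_div_cancel_right₀ a hk]

theorem exists_eq_neg_sq_mul_log_abs_cos_of_ode (hs : IsOpen s) (hs' : IsPreconnected s)
    (hk : k ≠ 0) (hg' : ∀ u ∈ s, HasDerivAt g (g' u) u)
    (hg'' : ∀ u ∈ s, HasDerivAt g' (g'' u) u)
    (hode : ∀ u ∈ s, g'' u * k ^ 2 = k ^ 2 + g' u ^ 2) :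
    ∃ D E, ∀ u ∈ s, cos ((u + D) / k) ≠ 0 ∧ g u = -k ^ 2 * log |cos ((u + D) / k)| + E := by
  obtain ⟨D, hD⟩ := exists_arctan_div_eq_of_ode hs hs' hk hg'' hode
  have hcos : ∀ u ∈ s, cos ((u + D) / k) ≠ 0 := fun u hu ↦ by
    rw [← hD u hu]
    exact (cos_arctan_pos _).ne'
  have hg'_eq : ∀ u ∈ s, g' u = k * tan ((u + D) / k) := fun u hu ↦ by
    rw [← hD u hu, tan_arctan, mul_div_cancel₀ _ hk]
  obtain ⟨E, hE⟩ := hs.exists_eqOn_add_of_hasDerivAt hs' hg' fun u hu ↦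
    hg'_eq u hu ▸ hasDerivAt_neg_sq_mul_log_abs_cos_div hk (hcos u hu)
  exact ⟨D, E, fun u hu ↦ ⟨hcos u hu, hE hu⟩⟩

end ScherkODE

/-- Every solution of g''·(1+c²) = 1+c²+g'² on an open interval is of Scherk type:
g(u) = -(1+c²)·log|cos((u+D)/√(1+c²))| + E. -/
theorem scherk_type_uniqueness
    (c a b : ℝ) (g g' g'' : ℝ → ℝ)
    (hg' : ∀ u ∈ Set.Ioo a b, HasDerivAt g (g' u) u)
    (hg'' : ∀ u ∈ Set.Ioo a b, HasDerivAt g' (g'' u) u)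
    (hode : ∀ u ∈ Set.Ioo a b, g'' u * (1 + c ^ 2) = 1 + c ^ 2 + g' u ^ 2) :
    ∃ D E : ℝ, ∀ u ∈ Set.Ioo a b,
      Real.cos ((u + D) / Real.sqrt (1 + c ^ 2)) ≠ 0 ∧
      g u = -(1 + c ^ 2) * Real.log |Real.cos ((u + D) / Real.sqrt (1 + c ^ 2))| + E := by
  have hk2 : √(1 + c ^ 2) ^ 2 = 1 + c ^ 2 := sq_sqrt (by positivity)
  have hk : √(1 + c ^ 2) ≠ 0 := (sqrt_pos.2 (by positivity)).ne'
  simpa only [hk2] using exists_eq_neg_sq_mul_log_abs_cos_of_ode isOpen_Ioo isPreconnected_Ioo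
    hk hg' hg'' (by simpa only [hk2] using hode)
end
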